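/- arXiv:0905.2603 — 5 statements merged into one kernel-verified Lean document; each statement's English description precedes it below -/
import Mathlib

section
/- Let m, n be nonnegative integers and d = m - n. For a partition λ with λ_{m+1} ≤ n, define i(λ) = max{i : 1 ≤ i ≤ m, λ_i + d - i ≥ 0} (with i(λ) = 0 if no such i exists) and j(λ) = max{j : 1 ≤ j ≤ n, λ'_j - d - j ≥ 0} (with j(λ) = 0 if no such j exists), where λ' is the conjugate partition. Then m - i(λ) = n - j(λ), equivalently i(λ) - j(λ) = d. -/
/-- Conjugation duality: for `i, j ≥ 1`, `λ'_j ≥ i ↔ λ_i ≥ j`. -/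
lemma conj_ge_iff (f : ℕ → ℕ) (hf : Antitone f) (hfin : ∃ N, ∀ i, N ≤ i → f i = 0)
    (i j : ℕ) (hi : 1 ≤ i) (hj : 1 ≤ j) :
    i ≤ Set.ncard {k : ℕ | j ≤ f k} ↔ j ≤ f (i - 1) := by
  obtain ⟨N, hN⟩ := hfin
  have hdc : ∀ k k' : ℕ, k' ≤ k → j ≤ f k → j ≤ f k' := fun k k' hle h => le_trans h (hf hle)
  have hfinS : {k : ℕ | j ≤ f k}.Finite := by
    apply (Set.finite_Iio N).subset
    intro k hk
    simp only [Set.mem_setOf_eq] at hk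
    simp only [Set.mem_Iio]
    by_contra h
    push_neg at h
    have := hN k h
    omega
  constructor
  · intro h
    by_contra hcon
    push_neg at hcon
    have hsub : {k : ℕ | j ≤ f k} ⊆ Set.Iio (i - 1) := by
      intro k hk
      simp only [Set.mem_setOf_eq] at hk
      simp only [Set.mem_Iio]
      by_contra hk2
      push_neg at hk2
      exact absurd (hdc k (i - 1) hk2 hk) (by omega)
    have hle := Set.ncard_le_ncard hsub (Set.finite_Iio _)
    rw [show Set.Iio (i - 1) = ↑(Finset.Iio (i - 1)) by simp, Set.ncard_coe_finset] at hle
    simp only [Nat.card_Iio] at hle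
    omega
  · intro h
    have hsub : Set.Iic (i - 1) ⊆ {k : ℕ | j ≤ f k} := by
      intro k hk
      simp only [Set.mem_Iic] at hk
      exact hdc (i - 1) k hk h
    have hle := Set.ncard_le_ncard hsub hfinS
    rw [show Set.Iic (i - 1) = ↑(Finset.Iic (i - 1)) by simp, Set.ncard_coe_finset] at hle
    simp only [Nat.card_Iic] at hle
    omega

/-- For a partition `λ` (encoded by `f : ℕ → ℕ`, `λ_i = f (i-1)`) in the fat
`(m,n)`-hook (`λ_{m+1} ≤ n`), with `d = m - n`,
`i(λ) = max{i ∈ [1,m] : λ_i + d - i ≥ 0}` and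
`j(λ) = max{j ∈ [1,n] : λ'_j - d - j ≥ 0}` (both `0` if no such index exists),
we have `m - i(λ) = n - j(λ)`. -/
theorem statement0 (m n : ℕ) (f : ℕ → ℕ) (hf : Antitone f)
    (hfin : ∃ N, ∀ i, N ≤ i → f i = 0)
    (hhook : f m ≤ n) :
    (m : ℤ) -
        (((Finset.Icc 1 m).filter
          (fun i => 0 ≤ (f (i - 1) : ℤ) + ((m : ℤ) - (n : ℤ)) - (i : ℤ))).sup id : ℕ)
      = (n : ℤ) -
        (((Finset.Icc 1 n).filter
          (fun j => 0 ≤ (Set.ncard {i : ℕ | j ≤ f i} : ℤ) - ((m : ℤ) - (n : ℤ)) - (j : ℤ))).sup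
            id : ℕ) := by
  set A := (Finset.Icc 1 m).filter
      (fun i => 0 ≤ (f (i - 1) : ℤ) + ((m : ℤ) - (n : ℤ)) - (i : ℤ)) with hA
  set B := (Finset.Icc 1 n).filter
      (fun j => 0 ≤ (Set.ncard {i : ℕ | j ≤ f i} : ℤ) - ((m : ℤ) - (n : ℤ)) - (j : ℤ)) with hB
  set a := A.sup id with ha
  set b := B.sup id with hb
  have hmemA : ∀ x ∈ A, 1 ≤ x ∧ x ≤ m ∧ 0 ≤ (f (x - 1) : ℤ) + ((m : ℤ) - n) - x := by
    intro x hx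
    rw [hA, Finset.mem_filter, Finset.mem_Icc] at hx
    tauto
  have hmemB : ∀ x ∈ B, 1 ≤ x ∧ x ≤ n ∧
      0 ≤ (Set.ncard {i : ℕ | x ≤ f i} : ℤ) - ((m : ℤ) - n) - x := by
    intro x hx
    rw [hB, Finset.mem_filter, Finset.mem_Icc] at hx
    tauto
  have ha_le : a ≤ m := Finset.sup_le fun x hx => (hmemA x hx).2.1
  have hb_le : b ≤ n := Finset.sup_le fun x hx => (hmemB x hx).2.1
  -- a ≥ d when d ≥ 1
  have ha_ge : n < m → m - n ≤ a := by
    intro hlt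
    refine Finset.le_sup (f := id) (b := m - n) ?_
    rw [hA, Finset.mem_filter, Finset.mem_Icc]
    refine ⟨⟨by omega, by omega⟩, ?_⟩
    have h1 : ((m - n : ℕ) : ℤ) = (m : ℤ) - n := by omega
    rw [h1]
    have : (0 : ℤ) ≤ (f (m - n - 1) : ℤ) := by positivity
    omega
  -- b ≥ -d when -d ≥ 1
  have hb_ge : m < n → n - m ≤ b := by
    intro hlt
    refine Finset.le_sup (f := id) (b := n - m) ?_
    rw [hB, Finset.mem_filter, Finset.mem_Icc]
    refine ⟨⟨by omega, by omega⟩, ?_⟩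
    have h1 : ((n - m : ℕ) : ℤ) = (n : ℤ) - m := by omega
    rw [h1]
    have : (0 : ℤ) ≤ (Set.ncard {i : ℕ | n - m ≤ f i} : ℤ) := by positivity
    omega
  have ha_ge' : (n : ℤ) ≤ (a : ℤ) + n ∧ ((n : ℤ) < m → (m : ℤ) - n ≤ a) := by
    constructor
    · omega
    · intro h
      have h2 : n < m := by exact_mod_cast h
      have := ha_ge h2
      omega
  have hb_ge' : (m : ℤ) < n → (n : ℤ) - m ≤ b := by
    intro h
    have h2 : m < n := by exact_mod_cast h
    have := hb_ge h2
    omega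
  obtain ⟨-, ha_ge'⟩ := ha_ge'
  -- a ≤ b + d
  have key1 : (a : ℤ) ≤ (b : ℤ) + ((m : ℤ) - n) := by
    rcases Nat.eq_zero_or_pos a with h0 | hpos
    · rcases le_or_gt m n with h | h
      · rcases eq_or_lt_of_le h with h' | h'
        · omega
        · have := hb_ge' (by exact_mod_cast h')
          omega
      · omega
    · have hne : A.Nonempty := by
        by_contra hne
        rw [Finset.not_nonempty_iff_eq_empty] at hne
        rw [ha, hne] at hpos
        simp at hpos
      obtain ⟨x, hx, hax⟩ := Finset.exists_mem_eq_sup A hne id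
      rw [← ha] at hax
      simp only [id] at hax
      obtain ⟨hx1, hxm, hxc⟩ := hmemA x hx
      rcases le_or_gt ((x : ℤ) - ((m : ℤ) - n)) 0 with hj | hj
      · omega
      · have hjn1 : 1 ≤ x + n - m := by omega
        have hjnz : ((x + n - m : ℕ) : ℤ) = (x : ℤ) - ((m : ℤ) - n) := by omega
        have hjnn : x + n - m ≤ n := by omega
        have hdual : x ≤ Set.ncard {k : ℕ | x + n - m ≤ f k} := by
          rw [conj_ge_iff f hf hfin x (x + n - m) hx1 hjn1]
          omega
        have hmem : x + n - m ∈ B := by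
          rw [hB, Finset.mem_filter, Finset.mem_Icc]
          refine ⟨⟨hjn1, hjnn⟩, ?_⟩
          have : (x : ℤ) ≤ (Set.ncard {k : ℕ | x + n - m ≤ f k} : ℤ) := by
            exact_mod_cast hdual
          omega
        have : x + n - m ≤ b := Finset.le_sup (f := id) hmem
        omega
  -- b ≤ a - d
  have key2 : (b : ℤ) ≤ (a : ℤ) - ((m : ℤ) - n) := by
    rcases Nat.eq_zero_or_pos b with h0 | hpos
    · rcases le_or_gt n m with h | h
      · rcases eq_or_lt_of_le h with h' | h'
        · omega
        · have := ha_ge' (by exact_mod_cast h')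
          omega
      · omega
    · have hne : B.Nonempty := by
        by_contra hne
        rw [Finset.not_nonempty_iff_eq_empty] at hne
        rw [hb, hne] at hpos
        simp at hpos
      obtain ⟨x, hx, hbx⟩ := Finset.exists_mem_eq_sup B hne id
      rw [← hb] at hbx
      simp only [id] at hbx
      obtain ⟨hx1, hxn, hxc⟩ := hmemB x hx
      rcases le_or_gt ((x : ℤ) + ((m : ℤ) - n)) 0 with hi | hi
      · omega
      · have hiN1 : 1 ≤ x + m - n := by omega
        have hiNz : ((x + m - n : ℕ) : ℤ) = (x : ℤ) + ((m : ℤ) - n) := by omega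
        have hiNm : x + m - n ≤ m := by omega
        have hdual : x ≤ f (x + m - n - 1) := by
          rw [← conj_ge_iff f hf hfin (x + m - n) x hiN1 hx1]
          have h2 : ((x + m - n : ℕ) : ℤ) ≤ (Set.ncard {k : ℕ | x ≤ f k} : ℤ) := by omega
          exact_mod_cast h2
        have hmem : x + m - n ∈ A := by
          rw [hA, Finset.mem_filter, Finset.mem_Icc]
          refine ⟨⟨hiN1, hiNm⟩, ?_⟩
          have : (x : ℤ) ≤ (f (x + m - n - 1) : ℤ) := by exact_mod_cast hdual
          omega
        have : x + m - n ≤ a := Finset.le_sup (f := id) hmem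
        omega
  omega
end

section
/- The number of self-conjugate partitions (partitions λ with λ = λ') whose Young diagram is contained in the m × n rectangle (i.e. λ_1 ≤ n and the number of parts is at most m) equals 2^{min(m,n)}. -/
open Finset

private def B (a b : ℕ) : Set (Finset (ℕ × ℕ)) :=
  {Y : Finset (ℕ × ℕ) |
      (∀ p ∈ Y, p.1 < a ∧ p.2 < b) ∧
      (∀ i j i' j' : ℕ, (i, j) ∈ Y → i' ≤ i → j' ≤ j → (i', j') ∈ Y) ∧
      (∀ i j : ℕ, (i, j) ∈ Y ↔ (j, i) ∈ Y)}

private lemma B_finite (a b : ℕ) : (B a b).Finite := by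
  apply Set.Finite.subset (Finset.finite_toSet ((range a ×ˢ range b).powerset))
  intro Y hY
  simp only [Finset.coe_powerset, Set.mem_preimage, Set.mem_powerset_iff]
  intro p hp
  obtain ⟨h1, h2⟩ := hY.1 p hp
  simp [Finset.mem_product, h1, h2]

private def dn (Y : Finset (ℕ × ℕ)) : Finset (ℕ × ℕ) :=
  (Y.filter (fun p => 1 ≤ p.1 ∧ 1 ≤ p.2)).image (fun p => (p.1 - 1, p.2 - 1))

private lemma mem_dn {Y : Finset (ℕ × ℕ)} {i j : ℕ} :
    (i, j) ∈ dn Y ↔ (i + 1, j + 1) ∈ Y := by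
  simp only [dn, Finset.mem_image, Finset.mem_filter]
  constructor
  · rintro ⟨⟨a, b⟩, ⟨hab, h1, h2⟩, heq⟩
    simp only [Prod.mk.injEq] at heq ⊢
    have : a = i + 1 ∧ b = j + 1 := by omega
    rwa [this.1, this.2] at hab
  · intro h
    exact ⟨(i + 1, j + 1), ⟨h, by omega, by omega⟩, by simp⟩

private def up (k : ℕ) (Z : Finset (ℕ × ℕ)) : Finset (ℕ × ℕ) :=
  Z.image (fun p => (p.1 + 1, p.2 + 1)) ∪
    (range (k + 1)).image (fun j => ((0 : ℕ), j)) ∪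
    (range (k + 1)).image (fun i => (i, (0 : ℕ)))

private lemma mem_up {k : ℕ} {Z : Finset (ℕ × ℕ)} {i j : ℕ} :
    (i, j) ∈ up k Z ↔
      (1 ≤ i ∧ 1 ≤ j ∧ (i - 1, j - 1) ∈ Z) ∨ (i = 0 ∧ j ≤ k) ∨ (j = 0 ∧ i ≤ k) := by
  simp only [up, Finset.mem_union, Finset.mem_image, Finset.mem_range, Prod.mk.injEq]
  constructor
  · rintro ((⟨⟨a, b⟩, hab, h1, h2⟩ | ⟨b, hb, h1, h2⟩) | ⟨a, ha, h1, h2⟩)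
    · left
      have : a = i - 1 ∧ b = j - 1 := by omega
      exact ⟨by omega, by omega, by rw [← this.1, ← this.2]; exact hab⟩
    · right; left; omega
    · right; right; omega
  · rintro (⟨h1, h2, h3⟩ | ⟨h1, h2⟩ | ⟨h1, h2⟩)
    · left; left; exact ⟨(i - 1, j - 1), h3, by omega, by omega⟩
    · left; right; exact ⟨j, by omega, by omega, rfl⟩
    · right; exact ⟨i, by omega, rfl, by omega⟩

private lemma B_zero : B 0 0 = {∅} := by
  ext Y
  simp only [B, Set.mem_setOf_eq, Set.mem_singleton_iff]
  constructor
  · rintro ⟨h1, -, -⟩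
    ext p
    simp only [Finset.notMem_empty, iff_false]
    intro hp
    exact absurd (h1 p hp).1 (by omega)
  · rintro rfl
    refine ⟨by simp, by simp, by simp⟩

-- key lemma: if Y ∈ B (k+1) (k+1) and (0,k) ∈ Y, then all border cells are in Y
private lemma border_mem {k : ℕ} {Y : Finset (ℕ × ℕ)} (hY : Y ∈ B (k + 1) (k + 1))
    (h0 : (0, k) ∈ Y) {i j : ℕ} (hij : i = 0 ∧ j ≤ k ∨ j = 0 ∧ i ≤ k) : (i, j) ∈ Y := by
  obtain ⟨hb, hd, hs⟩ := hY
  have hk0 : (k, 0) ∈ Y := (hs 0 k).1 h0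
  rcases hij with ⟨rfl, hj⟩ | ⟨rfl, hi⟩
  · exact hd 0 k 0 j h0 le_rfl hj
  · exact hd k 0 i 0 hk0 hi le_rfl

private lemma dn_mem_B {k : ℕ} {Y : Finset (ℕ × ℕ)} (hY : Y ∈ B (k + 1) (k + 1)) :
    dn Y ∈ B k k := by
  obtain ⟨hb, hd, hs⟩ := hY
  refine ⟨?_, ?_, ?_⟩
  · rintro ⟨i, j⟩ hp
    rw [mem_dn] at hp
    have := hb _ hp
    simp at this ⊢
    omega
  · intro i j i' j' h hi hj
    rw [mem_dn] at h ⊢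
    exact hd _ _ _ _ h (by omega) (by omega)
  · intro i j
    rw [mem_dn, mem_dn]
    exact hs _ _

private lemma up_mem_B {k : ℕ} {Z : Finset (ℕ × ℕ)} (hZ : Z ∈ B k k) :
    up k Z ∈ B (k + 1) (k + 1) ∧ (0, k) ∈ up k Z := by
  obtain ⟨hb, hd, hs⟩ := hZ
  refine ⟨⟨?_, ?_, ?_⟩, ?_⟩
  · rintro ⟨i, j⟩ hp
    rw [mem_up] at hp
    rcases hp with ⟨h1, h2, h3⟩ | h | h
    · have := hb _ h3
      simp at this ⊢
      omega
    · simp; omega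
    · simp; omega
  · intro i j i' j' h hi hj
    rw [mem_up] at h ⊢
    rcases Nat.eq_zero_or_pos i' with rfl | hi'
    · right; left
      rcases h with ⟨h1, h2, h3⟩ | ⟨h1, h2⟩ | ⟨h1, h2⟩
      · have := (hb _ h3).2
        omega
      · omega
      · omega
    rcases Nat.eq_zero_or_pos j' with rfl | hj'
    · right; right
      rcases h with ⟨h1, h2, h3⟩ | ⟨h1, h2⟩ | ⟨h1, h2⟩
      · have := (hb _ h3).1
        omega
      · omega
      · omega
    · left
      rcases h with ⟨h1, h2, h3⟩ | ⟨h1, h2⟩ | ⟨h1, h2⟩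
      · exact ⟨hi', hj', hd _ _ _ _ h3 (by omega) (by omega)⟩
      · omega
      · omega
  · intro i j
    rw [mem_up, mem_up]
    constructor
    · rintro (⟨h1, h2, h3⟩ | h | h)
      · exact Or.inl ⟨h2, h1, (hs _ _).1 h3⟩
      · right; right; omega
      · right; left; omega
    · rintro (⟨h1, h2, h3⟩ | h | h)
      · exact Or.inl ⟨h2, h1, (hs _ _).1 h3⟩
      · right; right; omega
      · right; left; omega
  · rw [mem_up]; right; left; omega

private lemma up_dn {k : ℕ} {Y : Finset (ℕ × ℕ)} (hY : Y ∈ B (k + 1) (k + 1))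
    (h0 : (0, k) ∈ Y) : up k (dn Y) = Y := by
  ext ⟨i, j⟩
  rw [mem_up]
  constructor
  · rintro (⟨h1, h2, h3⟩ | h | h)
    · rw [mem_dn] at h3
      have : i - 1 + 1 = i ∧ j - 1 + 1 = j := by omega
      rwa [this.1, this.2] at h3
    · exact border_mem hY h0 (Or.inl h)
    · exact border_mem hY h0 (Or.inr h)
  · intro h
    rcases Nat.eq_zero_or_pos i with rfl | hi
    · right; left; exact ⟨rfl, by have := (hY.1 _ h).2; omega⟩
    rcases Nat.eq_zero_or_pos j with rfl | hj
    · right; right; exact ⟨rfl, by have := (hY.1 _ h).1; omega⟩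
    · left
      refine ⟨hi, hj, ?_⟩
      rw [mem_dn]
      have : i - 1 + 1 = i ∧ j - 1 + 1 = j := by omega
      rw [this.1, this.2]
      exact h

private lemma dn_up {k : ℕ} (Z : Finset (ℕ × ℕ)) : dn (up k Z) = Z := by
  ext ⟨i, j⟩
  rw [mem_dn, mem_up]
  constructor
  · rintro (⟨h1, h2, h3⟩ | h | h)
    · simpa using h3
    · omega
    · omega
  · intro h
    exact Or.inl ⟨by omega, by omega, by simpa using h⟩

private lemma B_card : ∀ k : ℕ, (B k k).ncard = 2 ^ k := by
  intro k
  induction k with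
  | zero => rw [B_zero]; simp
  | succ k ih =>
    have hsplit : B (k + 1) (k + 1) =
        B k k ∪ {Y ∈ B (k + 1) (k + 1) | (0, k) ∈ Y} := by
      ext Y
      simp only [Set.mem_union, Set.mem_setOf_eq]
      constructor
      · intro hY
        by_cases h0 : (0, k) ∈ Y
        · exact Or.inr ⟨hY, h0⟩
        · left
          obtain ⟨hb, hd, hs⟩ := hY
          refine ⟨?_, hd, hs⟩
          rintro ⟨i, j⟩ hp
          have hb2 := hb _ hp
          simp only at hb2
          have hj : j ≠ k := fun hjk => h0 (hd i j 0 k hp (by omega) (by omega))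
          have hik : (j, i) ∈ Y := (hs i j).1 hp
          have hi : i ≠ k := fun hik' => h0 (hd j i 0 k hik (by omega) (by omega))
          exact ⟨by omega, by omega⟩
      · rintro (⟨hb, hd, hs⟩ | ⟨hY, -⟩)
        · exact ⟨fun p hp => ⟨by have := (hb p hp).1; omega,
            by have := (hb p hp).2; omega⟩, hd, hs⟩
        · exact hY
    have hdisj : Disjoint (B k k) {Y ∈ B (k + 1) (k + 1) | (0, k) ∈ Y} := by
      rw [Set.disjoint_left]
      rintro Y ⟨hb, -, -⟩ ⟨-, h0⟩
      have := (hb _ h0).2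
      omega
    have hfin1 : (B k k).Finite := B_finite k k
    have hfin2 : ({Y ∈ B (k + 1) (k + 1) | (0, k) ∈ Y} : Set (Finset (ℕ × ℕ))).Finite :=
      (B_finite (k + 1) (k + 1)).subset (fun Y hY => hY.1)
    have himg : dn '' {Y ∈ B (k + 1) (k + 1) | (0, k) ∈ Y} = B k k := by
      ext Z
      constructor
      · rintro ⟨Y, ⟨hY, -⟩, rfl⟩
        exact dn_mem_B hY
      · intro hZ
        exact ⟨up k Z, ⟨(up_mem_B hZ).1, (up_mem_B hZ).2⟩, dn_up Z⟩
    have hinj : Set.InjOn dn {Y ∈ B (k + 1) (k + 1) | (0, k) ∈ Y} := by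
      rintro Y1 ⟨hY1, h01⟩ Y2 ⟨hY2, h02⟩ heq
      rw [← up_dn hY1 h01, ← up_dn hY2 h02, heq]
    have hcard2 : ({Y ∈ B (k + 1) (k + 1) | (0, k) ∈ Y} : Set (Finset (ℕ × ℕ))).ncard
        = (B k k).ncard := by
      rw [← himg, Set.ncard_image_of_injOn hinj]
    rw [hsplit, Set.ncard_union_eq hdisj hfin1 hfin2, hcard2, ih]
    ring

/-- The number of self-conjugate Young diagrams (encoded as downward-closed
finite subsets of `ℕ × ℕ`, symmetric under transposition) contained in the `m × n`
rectangle equals `2 ^ min m n`. -/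
theorem statement2 (m n : ℕ) :
    Set.ncard {Y : Finset (ℕ × ℕ) |
      (∀ p ∈ Y, p.1 < m ∧ p.2 < n) ∧
      (∀ i j i' j' : ℕ, (i, j) ∈ Y → i' ≤ i → j' ≤ j → (i', j') ∈ Y) ∧
      (∀ i j : ℕ, (i, j) ∈ Y ↔ (j, i) ∈ Y)} = 2 ^ min m n := by
  have hBmn : {Y : Finset (ℕ × ℕ) |
      (∀ p ∈ Y, p.1 < m ∧ p.2 < n) ∧
      (∀ i j i' j' : ℕ, (i, j) ∈ Y → i' ≤ i → j' ≤ j → (i', j') ∈ Y) ∧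
      (∀ i j : ℕ, (i, j) ∈ Y ↔ (j, i) ∈ Y)} = B (min m n) (min m n) := by
    ext Y
    simp only [B, Set.mem_setOf_eq]
    constructor
    · rintro ⟨hb, hd, hs⟩
      refine ⟨?_, hd, hs⟩
      rintro ⟨i, j⟩ hp
      have h1 := hb _ hp
      have h2 := hb _ ((hs i j).1 hp)
      simp only at h1 h2
      constructor <;> omega
    · rintro ⟨hb, hd, hs⟩
      refine ⟨?_, hd, hs⟩
      intro p hp
      have := hb p hp
      omega
  rw [hBmn, B_card]
end

section
/- The number of partitions of Frobenius form (a_1, ..., a_r | a_1+1, ..., a_r+1), i.e. partitions λ whose Frobenius coordinates satisfy β_i = α_i + 1 for all i (including the empty partition), whose Young diagram is contained in the m × n rectangle, equals 2^{min(m-1, n)} for m ≥ 1. -/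
open Finset

namespace St3

/-- number of elements of `S` that are `≥ t` -/
def cS (S : Finset ℕ) (t : ℕ) : ℕ := (S.filter (fun s => t ≤ s)).card

lemma cS_anti {S : Finset ℕ} {t u : ℕ} (h : t ≤ u) : cS S u ≤ cS S t := by
  apply card_le_card
  intro x hx
  simp only [mem_filter] at hx ⊢
  exact ⟨hx.1, by omega⟩

lemma cS_le_add {S : Finset ℕ} {t u : ℕ} (h : t ≤ u) : cS S t ≤ cS S u + (u - t) := by
  have hsub : S.filter (fun s => t ≤ s) ⊆ S.filter (fun s => u ≤ s) ∪ Finset.Ico t u := by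
    intro x hx
    simp only [mem_filter, mem_union, mem_Ico] at hx ⊢
    rcases le_or_gt u x with h' | h'
    · exact Or.inl ⟨hx.1, h'⟩
    · exact Or.inr ⟨hx.2, h'⟩
  have h2 := card_le_card hsub
  have h3 := card_union_le (S.filter fun s => u ≤ s) (Finset.Ico t u)
  have h4 : (Finset.Ico t u).card = u - t := Nat.card_Ico t u
  unfold cS
  omega

lemma cS_key {S : Finset ℕ} {t u k k' : ℕ} (h : k < cS S u) (h1 : k' ≤ k)
    (h2 : t + k' ≤ u + k) : k' < cS S t := by
  rcases le_or_gt t u with hle | hlt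
  · exact lt_of_le_of_lt h1 (lt_of_lt_of_le h (cS_anti hle))
  · have h3 := cS_le_add (u := t) (t := u) (S := S) hlt.le
    omega

lemma cS_bound {S : Finset ℕ} {K t : ℕ} (hS : S ⊆ range K) : cS S t ≤ K - t := by
  have hsub : S.filter (fun s => t ≤ s) ⊆ Finset.Ico t K := by
    intro x hx
    simp only [mem_filter, mem_Ico] at hx ⊢
    have := hS hx.1
    simp only [mem_range] at this
    omega
  have := card_le_card hsub
  have h4 : (Finset.Ico t K).card = K - t := Nat.card_Ico t K
  unfold cS
  omega

lemma seg_of_dc {D : Finset ℕ} (h : ∀ x ∈ D, ∀ y, y ≤ x → y ∈ D) {x : ℕ} :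
    x ∈ D ↔ x < D.card := by
  constructor
  · intro hx
    have hsub : Finset.range (x + 1) ⊆ D := by
      intro y hy
      simp only [mem_range] at hy
      exact h x hx y (by omega)
    have := card_le_card hsub
    simp only [card_range] at this
    omega
  · intro hx
    by_contra hxD
    have hsub : D ⊆ Finset.range x := by
      intro y hy
      simp only [mem_range]
      by_contra hyx
      exact hxD (h y hy x (by omega))
    have := card_le_card hsub
    simp only [card_range] at this
    omega

lemma mem_of_cS_lt {S : Finset ℕ} {s : ℕ} (h : cS S (s + 1) < cS S s) : s ∈ S := by
  by_contra hs
  have heq : S.filter (fun x => s ≤ x) = S.filter (fun x => s + 1 ≤ x) := by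
    ext x
    simp only [mem_filter]
    constructor
    · rintro ⟨h1, h2⟩
      refine ⟨h1, ?_⟩
      rcases eq_or_lt_of_le h2 with rfl | h3
      · exact absurd h1 hs
      · omega
    · rintro ⟨h1, h2⟩
      exact ⟨h1, by omega⟩
  unfold cS at h
  rw [heq] at h
  omega

lemma cS_lt_of_mem {S : Finset ℕ} {s : ℕ} (h : s ∈ S) : cS S (s + 1) < cS S s := by
  apply card_lt_card
  constructor
  · intro x hx
    simp only [mem_filter] at hx ⊢
    exact ⟨hx.1, by omega⟩
  · intro hsub
    have hmem : s ∈ S.filter (fun x => s ≤ x) := by simp [mem_filter, h]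
    have := hsub hmem
    simp only [mem_filter] at this
    omega


/-- The membership predicate for the diagram with arm set `S`. -/
def P (S : Finset ℕ) (p : ℕ × ℕ) : Prop :=
  (p.1 ≤ p.2 ∧ p.1 < cS S (p.2 - p.1)) ∨ (p.2 < p.1 ∧ p.2 < cS S (p.1 - p.2 - 1))

instance (S : Finset ℕ) : DecidablePred (P S) := fun p => by unfold P; infer_instance

def FS (m n : ℕ) (S : Finset ℕ) : Finset (ℕ × ℕ) :=
  (Finset.range m ×ˢ Finset.range n).filter (P S)

lemma P_bound {m n : ℕ} (hm : 1 ≤ m) {S : Finset ℕ} (hS : S ⊆ range (min (m - 1) n))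
    {p : ℕ × ℕ} (hp : P S p) : p.1 < m ∧ p.2 < n := by
  obtain ⟨i, j⟩ := p
  simp only [P] at hp
  rcases hp with ⟨hij, h⟩ | ⟨hij, h⟩
  · have hb := cS_bound (t := j - i) hS
    constructor <;> omega
  · have hb := cS_bound (t := i - j - 1) hS
    constructor <;> omega

lemma mem_FS {m n : ℕ} (hm : 1 ≤ m) {S : Finset ℕ} (hS : S ⊆ range (min (m - 1) n))
    {p : ℕ × ℕ} : p ∈ FS m n S ↔ P S p := by
  unfold FS
  simp only [mem_filter, mem_product, mem_range]
  exact ⟨fun h => h.2, fun h => ⟨⟨(P_bound hm hS h).1, (P_bound hm hS h).2⟩, h⟩⟩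

lemma FS_bound {m n : ℕ} (hm : 1 ≤ m) {S : Finset ℕ} (hS : S ⊆ range (min (m - 1) n)) :
    ∀ p ∈ FS m n S, p.1 < m ∧ p.2 < n :=
  fun _ hp => P_bound hm hS ((mem_FS hm hS).mp hp)

lemma FS_dc {m n : ℕ} (hm : 1 ≤ m) {S : Finset ℕ} (hS : S ⊆ range (min (m - 1) n)) :
    ∀ i j i' j' : ℕ, (i, j) ∈ FS m n S → i' ≤ i → j' ≤ j → (i', j') ∈ FS m n S := by
  intro i j i' j' hmem hi hj
  rw [mem_FS hm hS] at hmem ⊢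
  simp only [P] at hmem ⊢
  rcases hmem with ⟨hij, h⟩ | ⟨hij, h⟩ <;> rcases le_or_gt i' j' with h' | h'
  · exact Or.inl ⟨h', cS_key h (by omega) (by omega)⟩
  · exact Or.inr ⟨h', cS_key h (by omega) (by omega)⟩
  · exact Or.inl ⟨h', cS_key h (by omega) (by omega)⟩
  · exact Or.inr ⟨h', cS_key h (by omega) (by omega)⟩

lemma FS_diag {m n : ℕ} (hm : 1 ≤ m) {S : Finset ℕ} (hS : S ⊆ range (min (m - 1) n)) :
    ∀ i : ℕ, (i, i) ∈ FS m n S →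
      ((FS m n S).filter (fun p => p.2 = i)).card
        = ((FS m n S).filter (fun p => p.1 = i)).card + 1 := by
  intro i hii
  rw [mem_FS hm hS] at hii
  simp only [P] at hii
  have hi0 : i < cS S 0 := by
    rcases hii with ⟨_, h⟩ | ⟨h, _⟩
    · simpa using h
    · omega
  set D : Finset ℕ := (range n).filter (fun d => i < cS S d) with hD
  have hDdc : ∀ x ∈ D, ∀ y, y ≤ x → y ∈ D := by
    intro x hx y hy
    simp only [hD, mem_filter, mem_range] at hx ⊢
    exact ⟨by omega, lt_of_lt_of_le hx.2 (cS_anti hy)⟩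
  have hDmem : ∀ d, d ∈ D ↔ i < cS S d := by
    intro d
    simp only [hD, mem_filter, mem_range]
    constructor
    · exact fun h => h.2
    · intro h
      refine ⟨?_, h⟩
      have h1 := cS_bound (t := d) hS
      omega
  have hrowmem : ∀ b, (i, b) ∈ FS m n S ↔ b < i + D.card := by
    intro b
    rw [mem_FS hm hS]
    simp only [P]
    rcases le_or_gt i b with hib | hib
    · constructor
      · rintro (⟨_, h⟩ | ⟨h, _⟩)
        · have hd := (seg_of_dc hDdc).mp ((hDmem (b - i)).mpr h)
          omega
        · omega
      · intro hb
        left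
        refine ⟨hib, (hDmem _).mp ((seg_of_dc hDdc).mpr ?_)⟩
        omega
    · constructor
      · intro _
        omega
      · intro _
        right
        refine ⟨hib, ?_⟩
        have h1 := cS_le_add (t := 0) (u := i - b - 1) (S := S) (by omega)
        omega
  have hcolmem : ∀ a, (a, i) ∈ FS m n S ↔ a < i + 1 + D.card := by
    intro a
    rw [mem_FS hm hS]
    simp only [P]
    rcases le_or_gt a i with hai | hai
    · constructor
      · intro _
        omega
      · intro _
        left
        refine ⟨hai, ?_⟩
        have h1 := cS_le_add (t := 0) (u := i - a) (S := S) (by omega)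
        omega
    · constructor
      · rintro (⟨h, _⟩ | ⟨_, h⟩)
        · omega
        · have hd := (seg_of_dc hDdc).mp ((hDmem (a - i - 1)).mpr h)
          omega
      · intro hb
        right
        refine ⟨hai, (hDmem _).mp ((seg_of_dc hDdc).mpr ?_)⟩
        omega
  have hrow : (FS m n S).filter (fun p => p.1 = i) = {i} ×ˢ range (i + D.card) := by
    ext ⟨a, b⟩
    simp only [mem_filter, mem_product, mem_singleton, mem_range]
    constructor
    · rintro ⟨hab, rfl⟩
      exact ⟨rfl, (hrowmem b).mp hab⟩
    · rintro ⟨rfl, hb⟩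
      exact ⟨(hrowmem b).mpr hb, rfl⟩
  have hcol : (FS m n S).filter (fun p => p.2 = i) = range (i + 1 + D.card) ×ˢ {i} := by
    ext ⟨a, b⟩
    simp only [mem_filter, mem_product, mem_singleton, mem_range]
    constructor
    · rintro ⟨hab, rfl⟩
      exact ⟨(hcolmem a).mp hab, rfl⟩
    · rintro ⟨ha, rfl⟩
      exact ⟨(hcolmem a).mpr ha, rfl⟩
  rw [hrow, hcol]
  simp only [card_product, card_singleton, card_range]
  omega

lemma FS_inj {m n : ℕ} (hm : 1 ≤ m) :
    Set.InjOn (FS m n) ↑((range (min (m - 1) n)).powerset) := by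
  have key : ∀ A B : Finset ℕ, A ⊆ range (min (m - 1) n) → B ⊆ range (min (m - 1) n) →
      FS m n A = FS m n B → ∀ s ∈ A, s ∈ B := by
    intro A B hA hB hAB s hs
    have h1 : cS A (s + 1) < cS A s := cS_lt_of_mem hs
    set i := cS A (s + 1) with hi
    have hm1 : (i, i + s) ∈ FS m n A := by
      rw [mem_FS hm hA]
      simp only [P]
      left
      refine ⟨by omega, ?_⟩
      rw [show i + s - i = s by omega]
      omega
    have hm2 : (i, i + s + 1) ∉ FS m n A := by
      rw [mem_FS hm hA]
      simp only [P]
      rintro (⟨_, hc⟩ | ⟨hc, _⟩)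
      · rw [show i + s + 1 - i = s + 1 by omega] at hc
        omega
      · omega
    rw [hAB] at hm1 hm2
    rw [mem_FS hm hB] at hm1 hm2
    simp only [P] at hm1 hm2
    have hb1 : i < cS B s := by
      rcases hm1 with ⟨_, h⟩ | ⟨h, _⟩
      · rwa [show i + s - i = s by omega] at h
      · omega
    have hb2 : cS B (s + 1) ≤ i := by
      by_contra hc
      push_neg at hc
      refine hm2 (Or.inl ⟨by omega, ?_⟩)
      rw [show i + s + 1 - i = s + 1 by omega]
      omega
    exact mem_of_cS_lt (by omega)
  intro S hS S' hS' h
  simp only [mem_coe, coe_powerset, Set.mem_preimage, Set.mem_powerset_iff,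
    coe_subset] at hS hS'
  exact Finset.ext fun s => ⟨fun hx => key S S' hS hS' h s hx,
    fun hx => key S' S hS' hS h.symm s hx⟩

lemma exists_S {m n : ℕ} (hm : 1 ≤ m) {Y : Finset (ℕ × ℕ)}
    (H1 : ∀ p ∈ Y, p.1 < m ∧ p.2 < n)
    (H2 : ∀ i j i' j' : ℕ, (i, j) ∈ Y → i' ≤ i → j' ≤ j → (i', j') ∈ Y)
    (H3 : ∀ i : ℕ, (i, i) ∈ Y →
      (Y.filter (fun p => p.2 = i)).card = (Y.filter (fun p => p.1 = i)).card + 1) :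
    ∃ S ⊆ range (min (m - 1) n), FS m n S = Y := by
  classical
  set rl : ℕ → ℕ := fun i => (Y.filter (fun p => p.1 = i)).card with hrl
  set cl : ℕ → ℕ := fun j => (Y.filter (fun p => p.2 = j)).card with hcl
  have hrowY : ∀ i j, (i, j) ∈ Y ↔ j < rl i := by
    intro i j
    have himg : ((Y.filter (fun p => p.1 = i)).image Prod.snd).card = rl i := by
      rw [hrl]
      apply card_image_of_injOn
      intro p hp q hq hpq
      simp only [mem_coe, mem_filter] at hp hq
      exact Prod.ext (hp.2.trans hq.2.symm) hpq
    have hdc : ∀ x ∈ (Y.filter (fun p => p.1 = i)).image Prod.snd, ∀ y, y ≤ x →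
        y ∈ (Y.filter (fun p => p.1 = i)).image Prod.snd := by
      intro x hx y hy
      simp only [mem_image, mem_filter] at hx ⊢
      obtain ⟨p, ⟨hpY, hp1⟩, hp2⟩ := hx
      exact ⟨(i, y), ⟨H2 p.1 p.2 i y hpY (by omega) (by omega), rfl⟩, rfl⟩
    have hmem : j ∈ (Y.filter (fun p => p.1 = i)).image Prod.snd ↔ (i, j) ∈ Y := by
      simp only [mem_image, mem_filter]
      constructor
      · rintro ⟨p, ⟨hpY, hp1⟩, hp2⟩
        have hp : p = (i, j) := Prod.ext hp1 hp2
        rwa [hp] at hpY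
      · intro h
        exact ⟨(i, j), ⟨h, rfl⟩, rfl⟩
    rw [← hmem, seg_of_dc hdc, himg]
  have hcolY : ∀ i j, (i, j) ∈ Y ↔ i < cl j := by
    intro i j
    have himg : ((Y.filter (fun p => p.2 = j)).image Prod.fst).card = cl j := by
      rw [hcl]
      apply card_image_of_injOn
      intro p hp q hq hpq
      simp only [mem_coe, mem_filter] at hp hq
      exact Prod.ext hpq (hp.2.trans hq.2.symm)
    have hdc : ∀ x ∈ (Y.filter (fun p => p.2 = j)).image Prod.fst, ∀ y, y ≤ x →
        y ∈ (Y.filter (fun p => p.2 = j)).image Prod.fst := by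
      intro x hx y hy
      simp only [mem_image, mem_filter] at hx ⊢
      obtain ⟨p, ⟨hpY, hp2⟩, hp1⟩ := hx
      exact ⟨(y, j), ⟨H2 p.1 p.2 y j hpY (by omega) (by omega), rfl⟩, rfl⟩
    have hmem : i ∈ (Y.filter (fun p => p.2 = j)).image Prod.fst ↔ (i, j) ∈ Y := by
      simp only [mem_image, mem_filter]
      constructor
      · rintro ⟨p, ⟨hpY, hp2⟩, hp1⟩
        have hp : p = (i, j) := Prod.ext hp1 hp2
        rwa [hp] at hpY
      · intro h
        exact ⟨(i, j), ⟨h, rfl⟩, rfl⟩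
    rw [← hmem, seg_of_dc hdc, himg]
  have hrl_anti : ∀ i i', i' ≤ i → rl i ≤ rl i' := by
    intro i i' h
    by_contra hlt
    push_neg at hlt
    have h1 : (i, rl i') ∈ Y := (hrowY i _).mpr hlt
    have h2 := (hrowY i' (rl i')).mp (H2 i (rl i') i' (rl i') h1 h le_rfl)
    omega
  set Dg : Finset ℕ := (range m).filter (fun i => (i, i) ∈ Y) with hDg
  set a : ℕ → ℕ := fun i => rl i - (i + 1) with ha
  set S : Finset ℕ := Dg.image a with hSdef
  have ha_strict : ∀ x y, (x, x) ∈ Y → (y, y) ∈ Y → y < x → a x < a y := by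
    intro x y hx hy h
    have h1 := hrl_anti x y (le_of_lt h)
    have h2 := (hrowY x x).mp hx
    have h3 := (hrowY y y).mp hy
    simp only [ha]
    omega
  have hkey : ∀ i d, i < cS S d ↔ ((i, i) ∈ Y ∧ d ≤ a i) := by
    intro i d
    have himg : S.filter (fun s => d ≤ s) = (Dg.filter (fun i => d ≤ a i)).image a := by
      ext s
      simp only [hSdef, mem_filter, mem_image]
      constructor
      · rintro ⟨⟨x, hx, rfl⟩, hd⟩
        exact ⟨x, ⟨hx, hd⟩, rfl⟩
      · rintro ⟨x, ⟨hx, hd⟩, rfl⟩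
        exact ⟨⟨x, hx, rfl⟩, hd⟩
    have hinj : Set.InjOn a ↑(Dg.filter (fun i => d ≤ a i)) := by
      intro x hx y hy hxy
      simp only [coe_filter, Set.mem_setOf_eq, hDg, mem_filter, mem_range] at hx hy
      rcases lt_trichotomy x y with h | h | h
      · have := ha_strict y x hy.1.2 hx.1.2 h
        omega
      · exact h
      · have := ha_strict x y hx.1.2 hy.1.2 h
        omega
    have hcard : cS S d = (Dg.filter (fun i => d ≤ a i)).card := by
      rw [cS, himg, card_image_of_injOn hinj]
    have hdc2 : ∀ x ∈ Dg.filter (fun i => d ≤ a i), ∀ y, y ≤ x →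
        y ∈ Dg.filter (fun i => d ≤ a i) := by
      intro x hx y hy
      simp only [mem_filter, hDg, mem_range] at hx ⊢
      obtain ⟨⟨hxm, hxY⟩, hxa⟩ := hx
      have hyY : (y, y) ∈ Y := H2 x x y y hxY hy hy
      refine ⟨⟨by omega, hyY⟩, ?_⟩
      rcases eq_or_lt_of_le hy with rfl | hlt
      · exact hxa
      · have := ha_strict x y hxY hyY hlt
        omega
    rw [hcard, ← seg_of_dc hdc2]
    simp only [mem_filter, hDg, mem_range]
    constructor
    · rintro ⟨⟨_, h1⟩, h2⟩
      exact ⟨h1, h2⟩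
    · rintro ⟨h1, h2⟩
      exact ⟨⟨(H1 _ h1).1, h1⟩, h2⟩
  have hclrl : ∀ i, (i, i) ∈ Y → cl i = rl i + 1 := fun i hi => H3 i hi
  have hSsub : S ⊆ range (min (m - 1) n) := by
    intro s hs
    simp only [hSdef, mem_image, hDg, mem_filter, mem_range] at hs
    obtain ⟨x, ⟨hxm, hxY⟩, rfl⟩ := hs
    have h2 : x < rl x := (hrowY x x).mp hxY
    have hrn : rl x ≤ n := by
      by_contra hc
      push_neg at hc
      have hY : (x, n) ∈ Y := (hrowY x n).mpr hc
      exact absurd (H1 _ hY).2 (lt_irrefl n)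
    have hclm : cl x ≤ m := by
      by_contra hc
      push_neg at hc
      have hY : (m, x) ∈ Y := (hcolY m x).mpr hc
      exact absurd (H1 _ hY).1 (lt_irrefl m)
    have hcx := hclrl x hxY
    rw [mem_range]
    simp only [ha]
    omega
  refine ⟨S, hSsub, ?_⟩
  ext ⟨i, j⟩
  rw [mem_FS hm hSsub]
  simp only [P]
  rcases le_or_gt i j with hij | hij
  · constructor
    · rintro (⟨_, h⟩ | ⟨h, _⟩)
      · rw [hkey] at h
        obtain ⟨hd, hda⟩ := h
        have h1 := (hrowY i i).mp hd
        rw [hrowY]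
        simp only [ha] at hda
        omega
      · omega
    · intro h
      left
      have hdY : (i, i) ∈ Y := H2 i j i i h le_rfl hij
      have h1 := (hrowY i i).mp hdY
      have h2 := (hrowY i j).mp h
      refine ⟨hij, (hkey i (j - i)).mpr ⟨hdY, ?_⟩⟩
      simp only [ha]
      omega
  · constructor
    · rintro (⟨h, _⟩ | ⟨_, h⟩)
      · omega
      · rw [hkey] at h
        obtain ⟨hd, hda⟩ := h
        have h1 := (hrowY j j).mp hd
        have h2 := hclrl j hd
        rw [hcolY]
        simp only [ha] at hda
        omega
    · intro h
      right
      have hdY : (j, j) ∈ Y := H2 i j j j h hij.le le_rfl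
      have h1 := (hrowY j j).mp hdY
      have h2 := hclrl j hdY
      have h3 := (hcolY i j).mp h
      refine ⟨hij, (hkey j (i - j - 1)).mpr ⟨hdY, ?_⟩⟩
      simp only [ha]
      omega

theorem statement3' (m n : ℕ) (hm : 1 ≤ m) :
    Set.ncard {Y : Finset (ℕ × ℕ) |
      (∀ p ∈ Y, p.1 < m ∧ p.2 < n) ∧
      (∀ i j i' j' : ℕ, (i, j) ∈ Y → i' ≤ i → j' ≤ j → (i', j') ∈ Y) ∧
      (∀ i : ℕ, (i, i) ∈ Y →
        (Y.filter (fun p => p.2 = i)).card = (Y.filter (fun p => p.1 = i)).card + 1)} =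
    2 ^ min (m - 1) n := by
  classical
  have hset : {Y : Finset (ℕ × ℕ) |
      (∀ p ∈ Y, p.1 < m ∧ p.2 < n) ∧
      (∀ i j i' j' : ℕ, (i, j) ∈ Y → i' ≤ i → j' ≤ j → (i', j') ∈ Y) ∧
      (∀ i : ℕ, (i, i) ∈ Y →
        (Y.filter (fun p => p.2 = i)).card = (Y.filter (fun p => p.1 = i)).card + 1)} =
      ↑(((range (min (m - 1) n)).powerset).image (FS m n)) := by
    ext Y
    simp only [Set.mem_setOf_eq, coe_image, Set.mem_image, mem_coe, mem_powerset]
    constructor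
    · rintro ⟨H1, H2, H3⟩
      obtain ⟨S, hS, hFS⟩ := exists_S hm H1 H2 H3
      exact ⟨S, hS, hFS⟩
    · rintro ⟨S, hS, rfl⟩
      exact ⟨FS_bound hm hS, FS_dc hm hS, FS_diag hm hS⟩
  rw [hset, Set.ncard_coe_finset, card_image_of_injOn (FS_inj hm), card_powerset, card_range]

end St3

/-- For `m ≥ 1`, the number of Young diagrams contained in the `m × n`
rectangle which are of Frobenius form `(a₁,...,a_r | a₁+1,...,a_r+1)` — i.e. for every
diagonal box `(i,i)` of the diagram the `i`-th column is exactly one longer than the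
`i`-th row — equals `2 ^ min (m-1) n`.  (Diagrams are encoded as downward-closed finite
subsets of `ℕ × ℕ`; the empty diagram is included.) -/
theorem statement3 (m n : ℕ) (hm : 1 ≤ m) :
    Set.ncard {Y : Finset (ℕ × ℕ) |
      (∀ p ∈ Y, p.1 < m ∧ p.2 < n) ∧
      (∀ i j i' j' : ℕ, (i, j) ∈ Y → i' ≤ i → j' ≤ j → (i', j') ∈ Y) ∧
      (∀ i : ℕ, (i, i) ∈ Y →
        (Y.filter (fun p => p.2 = i)).card = (Y.filter (fun p => p.1 = i)).card + 1)} =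
    2 ^ min (m - 1) n :=
  St3.statement3' m n hm
end

section
/- For m variables x_1, ..., x_m, an integer a ≥ 0, and the complete homogeneous symmetric polynomial h_a, the alternation identity Σ_{w ∈ S_m} ε(w) w(h_a(x) x_1^{m-1} x_2^{m-2} ⋯ x_m^0) = Σ_{w ∈ S_m} ε(w) w(x_1^{a+m-1} x_2^{m-2} ⋯ x_m^0) holds, where S_m permutes the variables and ε is the sign character. Moreover, for 1-m ≤ a < 0 the left-hand side (with h_a := 0) and the right-hand side both vanish. -/
/-!
Write `δ = (m - 1, …, 1, 0)`. The alternant of the monomial `x^g` is the generalized Vandermonde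
determinant `det (x_k ^ g_i)`, so expanding `h_a` turns the left side into
`Σ_{|c| = a} det (x_k ^ (c + δ)_i)`. If `c ≠ (a, 0, …, 0)`, let `j ≥ 1` be its last nonzero
position; replacing `(c_{j-1}, c_j)` by `(c_j - 1, c_{j-1} + 1)` is an involution on these
compositions which permutes `c + δ` by the transposition `(j-1 j)`. It therefore swaps two columns
of the matrix, and its fixed points give two equal columns, so all these terms cancel and only
`c = (a, 0, …, 0)` survives. For `1 - m ≤ a < 0` the exponent `a + m - 1` of the first column
equals `m - 1 - i` for some column `i ≥ 1`.
-/

/-- Complete homogeneous symmetric polynomial, `0` for negative degree. -/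
noncomputable def completeHom {R : Type*} [CommRing R] {m : ℕ} (x : Fin m → R) (k : ℤ) : R :=
  if 0 ≤ k then ∑ c ∈ Finset.Nat.antidiagonalTuple m k.toNat, ∏ i, x i ^ c i else 0

open Finset Matrix Equiv

section Alternant

variable {R : Type*} [CommRing R] {ι : Type*} [Fintype ι] [DecidableEq ι]

def powMatrix (x : ι → R) (g : ι → ℕ) : Matrix ι ι R := Matrix.of fun k i => x k ^ g i

theorem sum_sign_mul_prod_pow_eq_det (x : ι → R) (g : ι → ℕ) :
    ∑ σ : Perm ι, ((Perm.sign σ : ℤ) : R) * ∏ i, x (σ i) ^ g i = (powMatrix x g).det :=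
  (det_apply' (powMatrix x g)).symm

theorem det_powMatrix_comp_swap (x : ι → R) (g : ι → ℕ) {i j : ι} (hij : i ≠ j) :
    (powMatrix x (g ∘ swap i j)).det = -(powMatrix x g).det := by
  rw [show powMatrix x (g ∘ swap i j) = (powMatrix x g).submatrix id (swap i j) from rfl,
    det_permute', Perm.sign_swap hij]
  simp

theorem det_powMatrix_eq_zero (x : ι → R) {g : ι → ℕ} {i j : ι} (hij : i ≠ j) (h : g i = g j) :
    (powMatrix x g).det = 0 :=
  det_zero_of_column_eq hij fun k => by simp [powMatrix, h]

end Alternant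

section Transfer

variable {ι : Type*} [DecidableEq ι]

def transfer (c : ι → ℕ) (i j : ι) : ι → ℕ :=
  Function.update (Function.update c i (c j - 1)) j (c i + 1)

variable {c : ι → ℕ} {i j : ι}

theorem transfer_apply_left (hij : i ≠ j) : transfer c i j i = c j - 1 := by
  simp [transfer, hij]

theorem transfer_apply_right : transfer c i j j = c i + 1 := by
  simp [transfer]

theorem transfer_apply_of_ne {k : ι} (hki : k ≠ i) (hkj : k ≠ j) : transfer c i j k = c k := by
  simp [transfer, hki, hkj]

theorem transfer_transfer (hij : i ≠ j) (hc : c j ≠ 0) : transfer (transfer c i j) i j = c := by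
  funext k
  rcases eq_or_ne k i with rfl | hki
  · rw [transfer_apply_left hij, transfer_apply_right]; simp
  rcases eq_or_ne k j with rfl | hkj
  · rw [transfer_apply_right, transfer_apply_left hij]; omega
  · rw [transfer_apply_of_ne hki hkj, transfer_apply_of_ne hki hkj]

theorem sum_transfer [Fintype ι] (hij : i ≠ j) (hc : c j ≠ 0) :
    ∑ k, transfer c i j k = ∑ k, c k := by
  have key : ∀ f : ι → ℕ, ∑ k, f k = f i + f j + ∑ k ∈ (univ.erase i).erase j, f k := fun f => by
    rw [← add_sum_erase _ _ (mem_univ i), ← add_sum_erase _ _ (mem_erase.2 ⟨hij.symm, mem_univ j⟩)]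
    ring
  rw [key, key c, transfer_apply_left hij, transfer_apply_right]
  have hrest : ∑ k ∈ (univ.erase i).erase j, transfer c i j k = ∑ k ∈ (univ.erase i).erase j, c k :=
    sum_congr rfl fun k hk => by
      obtain ⟨hkj, hki⟩ : k ≠ j ∧ k ≠ i := by simpa using hk
      exact transfer_apply_of_ne hki hkj
  omega

theorem transfer_add_eq_comp_swap {d : ι → ℕ} (hij : i ≠ j) (hc : c j ≠ 0) (hd : d i = d j + 1) :
    transfer c i j + d = (c + d) ∘ swap i j := by
  funext k
  rcases eq_or_ne k i with rfl | hki
  · simp only [Pi.add_apply, Function.comp_apply, swap_apply_left, transfer_apply_left hij]; omega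
  rcases eq_or_ne k j with rfl | hkj
  · simp only [Pi.add_apply, Function.comp_apply, swap_apply_right, transfer_apply_right]; omega
  · simp [transfer_apply_of_ne hki hkj, swap_apply_of_ne_of_ne hki hkj]

end Transfer

section LastNonzero

variable {n : ℕ}

/-- Equal to `0` also when `c = 0`. -/
noncomputable def lastNonzero (c : Fin (n + 1) → ℕ) : Fin (n + 1) :=
  (univ.filter fun i => c i ≠ 0).sup id

variable {c : Fin (n + 1) → ℕ}

theorem le_lastNonzero {k : Fin (n + 1)} (hk : c k ≠ 0) : k ≤ lastNonzero c :=
  le_sup (f := id) (mem_filter.2 ⟨mem_univ k, hk⟩)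

theorem eq_zero_of_lastNonzero_lt {k : Fin (n + 1)} (hk : lastNonzero c < k) : c k = 0 := by
  by_contra h
  exact (le_lastNonzero h).not_gt hk

theorem apply_lastNonzero_ne_zero (h : lastNonzero c ≠ 0) : c (lastNonzero c) ≠ 0 := by
  obtain hs | hs := (univ.filter fun i => c i ≠ 0).eq_empty_or_nonempty
  · exact absurd (by simp [lastNonzero, hs, bot_eq_zero]) h
  · obtain ⟨i, hi, he⟩ := exists_mem_eq_sup _ hs id
    rw [lastNonzero, he]
    exact (mem_filter.1 hi).2

theorem lastNonzero_eq {j : Fin (n + 1)} (hj : c j ≠ 0) (h : ∀ k, j < k → c k = 0) :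
    lastNonzero c = j :=
  le_antisymm (Finset.sup_le fun k hk => not_lt.1 fun hjk => (mem_filter.1 hk).2 (h k hjk))
    (le_lastNonzero hj)

theorem eq_single_of_lastNonzero_eq_zero (h : lastNonzero c = 0) :
    c = Pi.single 0 (∑ i, c i) := by
  have hz : ∀ k, k ≠ 0 → c k = 0 := fun k hk =>
    eq_zero_of_lastNonzero_lt (h ▸ Fin.pos_iff_ne_zero.2 hk)
  funext k
  rcases eq_or_ne k 0 with rfl | hk
  · rw [Pi.single_eq_same, sum_eq_single 0 (fun k _ hk => hz k hk) (by simp)]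
  · rw [Pi.single_eq_of_ne hk, hz k hk]

/-- The exponent vector `δ = (n, n - 1, …, 0)`. -/
def staircase (n : ℕ) : Fin (n + 1) → ℕ := fun i => n - i

noncomputable def flipLast (c : Fin (n + 1) → ℕ) : Fin (n + 1) → ℕ :=
  transfer c (lastNonzero c - 1) (lastNonzero c)

variable (h : lastNonzero c ≠ 0)
include h

theorem val_lastNonzero_sub_one : ((lastNonzero c - 1 : Fin (n + 1)) : ℕ) = lastNonzero c - 1 := by
  rw [Fin.coe_sub_one, if_neg h]

theorem lastNonzero_sub_one_ne : lastNonzero c - 1 ≠ lastNonzero c := fun he => by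
  have := congrArg Fin.val he
  rw [val_lastNonzero_sub_one h] at this
  have : (lastNonzero c : ℕ) ≠ 0 := Fin.val_ne_zero_iff.2 h
  omega

theorem lastNonzero_flipLast : lastNonzero (flipLast c) = lastNonzero c := by
  refine lastNonzero_eq (by simp [flipLast, transfer_apply_right]) fun k hk => ?_
  have hk' : k ≠ lastNonzero c - 1 := fun he => by
    have := Fin.lt_def.1 hk
    rw [he, val_lastNonzero_sub_one h] at this
    omega
  rw [flipLast, transfer_apply_of_ne hk' hk.ne', eq_zero_of_lastNonzero_lt hk]

theorem flipLast_flipLast : flipLast (flipLast c) = c := by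
  rw [flipLast, lastNonzero_flipLast h]
  exact transfer_transfer (lastNonzero_sub_one_ne h) (apply_lastNonzero_ne_zero h)

theorem flipLast_add_staircase :
    flipLast c + staircase n = (c + staircase n) ∘ swap (lastNonzero c - 1) (lastNonzero c) := by
  refine transfer_add_eq_comp_swap (lastNonzero_sub_one_ne h) (apply_lastNonzero_ne_zero h) ?_
  have := Fin.val_ne_zero_iff.2 h
  have := (lastNonzero c).is_le
  simp only [staircase, val_lastNonzero_sub_one h]
  omega

end LastNonzero

section Cancellation

variable {R : Type*} [CommRing R]

theorem sum_det_powMatrix_antidiagonalTuple {n : ℕ} (x : Fin (n + 1) → R) (a : ℕ) :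
    ∑ c ∈ Nat.antidiagonalTuple (n + 1) a, (powMatrix x (c + staircase n)).det =
      (powMatrix x (Pi.single 0 a + staircase n)).det := by
  have hsingle : Pi.single 0 a ∈ Nat.antidiagonalTuple (n + 1) a := by
    simp [Nat.mem_antidiagonalTuple]
  rw [← add_sum_erase _ _ hsingle, add_eq_left]
  have hlast : ∀ c ∈ (Nat.antidiagonalTuple (n + 1) a).erase (Pi.single 0 a),
      lastNonzero c ≠ 0 := fun c hc h => by
    obtain ⟨hne, hsum⟩ := mem_erase.1 hc
    rw [Nat.mem_antidiagonalTuple] at hsum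
    exact hne (hsum ▸ eq_single_of_lastNonzero_eq_zero h)
  refine sum_involution (fun c _ => flipLast c) (fun c hc => ?_) (fun c hc hne hfix => ?_)
    (fun c hc => ?_) (fun c hc => flipLast_flipLast (hlast c hc))
  · rw [flipLast_add_staircase (hlast c hc),
      det_powMatrix_comp_swap _ _ (lastNonzero_sub_one_ne (hlast c hc)), add_neg_cancel]
  · refine hne (det_powMatrix_eq_zero x (lastNonzero_sub_one_ne (hlast c hc)) ?_)
    simpa [hfix] using congrFun (flipLast_add_staircase (hlast c hc)) (lastNonzero c - 1)
  · obtain ⟨-, hsum⟩ := mem_erase.1 hc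
    rw [Nat.mem_antidiagonalTuple] at hsum
    refine mem_erase.2 ⟨fun he => ?_, ?_⟩
    · have := congrFun he (lastNonzero c)
      rw [flipLast, transfer_apply_right, Pi.single_eq_of_ne (hlast c hc)] at this
      omega
    · rw [Nat.mem_antidiagonalTuple, flipLast,
        sum_transfer (lastNonzero_sub_one_ne (hlast c hc)) (apply_lastNonzero_ne_zero (hlast c hc)),
        hsum]

theorem sum_sign_mul_completeHom_mul_prod {m : ℕ} (x : Fin m → R) (a : ℕ) (g : Fin m → ℕ) :
    ∑ σ : Perm (Fin m), ((Perm.sign σ : ℤ) : R) * (completeHom (x ∘ σ) a * ∏ i, x (σ i) ^ g i) =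
      ∑ c ∈ Nat.antidiagonalTuple m a, (powMatrix x (c + g)).det := by
  simp only [← sum_sign_mul_prod_pow_eq_det, completeHom, Nat.cast_nonneg, if_true,
    Int.toNat_natCast, Function.comp_apply, sum_mul, mul_sum, Pi.add_apply, pow_add,
    prod_mul_distrib]
  exact sum_comm

end Cancellation

/-- the alternation identity
`Σ_{w∈S_m} ε(w) w(h_a(x) x₁^{m-1}⋯x_m^0) = Σ_{w∈S_m} ε(w) w(x₁^{a+m-1} x₂^{m-2}⋯x_m^0)`
for `a ≥ 0`; moreover for `1-m ≤ a < 0` both sides (with `h_a := 0`) vanish. -/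
theorem statement9 {R : Type*} [CommRing R] (m : ℕ) (hm : 0 < m) (x : Fin m → R) :
    (∀ a : ℕ,
      ∑ σ : Equiv.Perm (Fin m), ((Equiv.Perm.sign σ : ℤ) : R) *
          (completeHom (x ∘ σ) (a : ℤ) * ∏ i, x (σ i) ^ (m - 1 - (i : ℕ))) =
      ∑ σ : Equiv.Perm (Fin m), ((Equiv.Perm.sign σ : ℤ) : R) *
          ∏ i, x (σ i) ^ (if (i : ℕ) = 0 then a + m - 1 else m - 1 - (i : ℕ))) ∧
    (∀ a : ℤ, 1 - (m : ℤ) ≤ a → a < 0 →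
      (∑ σ : Equiv.Perm (Fin m), ((Equiv.Perm.sign σ : ℤ) : R) *
          (completeHom (x ∘ σ) a * ∏ i, x (σ i) ^ (m - 1 - (i : ℕ))) = 0) ∧
      (∑ σ : Equiv.Perm (Fin m), ((Equiv.Perm.sign σ : ℤ) : R) *
          ∏ i, x (σ i) ^ (if (i : ℕ) = 0 then (a + m - 1).toNat else m - 1 - (i : ℕ)) = 0)) := by
  obtain ⟨n, rfl⟩ : ∃ n, m = n + 1 := ⟨m - 1, by omega⟩
  refine ⟨fun a => ?_, fun a ha₁ ha₂ => ⟨?_, ?_⟩⟩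
  · refine (sum_sign_mul_completeHom_mul_prod x a (staircase n)).trans ?_
    rw [sum_det_powMatrix_antidiagonalTuple, sum_sign_mul_prod_pow_eq_det]
    congr 2 with i
    rcases eq_or_ne i 0 with rfl | hi
    · simp [staircase]
    · simp [staircase, hi, Fin.val_ne_zero_iff.2 hi]
  · simp [completeHom, ha₂]
  · rw [sum_sign_mul_prod_pow_eq_det]
    have ht : (a + (n + 1 : ℕ) - 1).toNat < n := by omega
    exact det_powMatrix_eq_zero x (i := 0) (j := ⟨n - (a + (n + 1 : ℕ) - 1).toNat, by omega⟩)
      (Fin.ne_of_val_ne (by simp; omega)) (by simp; omega)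
end

section
/- Let λ be a partition with at most m parts and λ_1 < n. Then the super Schur polynomial satisfies the stability property: Σ_{w ∈ S_m × S_n} ε(w) w( SP_λ(x; y_1,...,y_n) x_1^{m-1}⋯x_m^0 y_1^{n-1}⋯y_n^0 ) = Σ_{w ∈ S_m × S_n} ε(w) w( SP_λ(x; y_1,...,y_{n-1}) x_1^{m-1}⋯x_m^0 y_1^{n-1}⋯y_n^0 ). -/
/-- Elementary symmetric polynomial, `0` outside `0 ≤ k ≤ n`. -/
noncomputable def elemSym {R : Type*} [CommRing R] {n : ℕ} (y : Fin n → R) (k : ℤ) : R :=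
  if 0 ≤ k then
    ∑ s ∈ (Finset.univ : Finset (Fin n)).powersetCard k.toNat, ∏ j ∈ s, y j
  else 0

/-- The super complete symmetric polynomial `h_a(x,y)`:
`h_a(x,y) = Σ_{j=0}^n (-1)^j h_{a-j}(x) e_j(y)`. -/
noncomputable def superComplete {R : Type*} [CommRing R] {m n : ℕ} (x : Fin m → R)
    (y : Fin n → R) (a : ℤ) : R :=
  ∑ j ∈ Finset.range (n + 1), (-1 : R) ^ j * completeHom x (a - (j : ℤ)) * elemSym y (j : ℤ)

/-- The super Schur polynomial `SP_λ(x,y)` via the Jacobi–Trudy determinant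
`det (h_{λ_i - i + j}(x,y))`. -/
noncomputable def superSchur {R : Type*} [CommRing R] {m n L : ℕ} (x : Fin m → R)
    (y : Fin n → R) (lam : Fin L → ℕ) : R :=
  Matrix.det (Matrix.of fun i j : Fin L =>
    superComplete x y ((lam i : ℤ) + (j : ℤ) - (i : ℤ)))

/-!
Write `y = (z, w)` with `w` the last variable. Since `H(x, (z, w); t) = H(x, z; t) (1 - w t)`,
subtracting `w` times each column of the Jacobi–Trudy matrix of `SP_λ(x; z)` from the next one
turns every column but the first into the corresponding column for `(x; y)`, while the first
column expands as `h_a(x; z) = Σ_{r ≤ n} w^r h_{a-r}(x; y)` because `λ₁ ≤ n`. Hence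
`SP_λ(x; z) = Σ_{r=0}^n w^r Ψ_r`, where `Ψ_r` is the Jacobi–Trudy determinant for `(x; y)` with
the indices of its first column lowered by `r`; each `Ψ_r` is symmetric in `y` and
`Ψ_0 = SP_λ(x; y)`. Alternating against `y^ρ = y₁^n ⋯ y_{n+1}^0`, the monomial `w^r y^ρ` has a
repeated exponent for `1 ≤ r ≤ n` and is killed, leaving only `Ψ_0`.
-/

open Finset Polynomial Equiv

section

variable {R : Type*} [CommRing R]

section ElemSym

variable {n : ℕ}

lemma elemSym_of_neg (y : Fin n → R) {k : ℤ} (hk : k < 0) : elemSym y k = 0 :=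
  if_neg hk.not_ge

lemma elemSym_of_lt (y : Fin n → R) {k : ℤ} (hk : (n : ℤ) < k) : elemSym y k = 0 := by
  rw [elemSym, if_pos (by omega), powersetCard_eq_empty.mpr (by simp; omega), sum_empty]

lemma elemSym_natCast_eq_coeff (y : Fin n → R) (k : ℕ) :
    elemSym y k = (∏ i, (1 + C (y i) * X)).coeff k := by
  simp_rw [elemSym, if_pos (Int.natCast_nonneg k), Int.toNat_natCast, prod_one_add,
    finsetSum_coeff, prod_mul_distrib, prod_const, ← map_prod, coeff_C_mul_X_pow,
    powersetCard_eq_filter, sum_filter, eq_comm (a := k)]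

lemma elemSym_comp_perm (y : Fin n → R) (τ : Perm (Fin n)) (k : ℤ) :
    elemSym (y ∘ τ) k = elemSym y k := by
  obtain hk | ⟨k, rfl⟩ := lt_or_ge k 0 |>.imp_right Int.eq_ofNat_of_zero_le
  · rw [elemSym_of_neg _ hk, elemSym_of_neg _ hk]
  · rw [elemSym_natCast_eq_coeff, elemSym_natCast_eq_coeff]
    exact congrArg (coeff · k) (Equiv.prod_comp τ fun i => 1 + C (y i) * X)

lemma elemSym_snoc (z : Fin n → R) (w : R) (k : ℤ) :
    elemSym (Fin.snoc z w : Fin (n + 1) → R) k = elemSym z k + w * elemSym z (k - 1) := by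
  obtain hk | ⟨k, rfl⟩ := lt_or_ge k 0 |>.imp_right Int.eq_ofNat_of_zero_le
  · simp [elemSym_of_neg _ hk, elemSym_of_neg _ (show k - 1 < 0 by omega)]
  have hprod : ∏ i, (1 + C ((Fin.snoc z w : Fin (n + 1) → R) i) * X)
      = (∏ i, (1 + C (z i) * X)) + C w * ((∏ i, (1 + C (z i) * X)) * X) := by
    rw [Fin.prod_univ_castSucc]
    simp only [Fin.snoc_castSucc, Fin.snoc_last]
    ring
  rw [elemSym_natCast_eq_coeff, elemSym_natCast_eq_coeff, hprod, coeff_add, coeff_C_mul]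
  cases k with
  | zero => simp [elemSym_of_neg]
  | succ k => rw [coeff_mul_X, Nat.cast_succ, add_sub_cancel_right, elemSym_natCast_eq_coeff]

end ElemSym

section SuperComplete

variable {m n : ℕ}

lemma superComplete_of_neg (x : Fin m → R) (y : Fin n → R) {a : ℤ} (ha : a < 0) :
    superComplete x y a = 0 :=
  sum_eq_zero fun j _ => by rw [completeHom, if_neg (by omega), mul_zero, zero_mul]

lemma superComplete_comp_perm (x : Fin m → R) (y : Fin n → R) (τ : Perm (Fin n)) (a : ℤ) :
    superComplete x (y ∘ τ) a = superComplete x y a := by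
  simp only [superComplete, elemSym_comp_perm]

/-- The generating-function identity `H(x, (z, w); t) = H(x, z; t) (1 - w t)`. -/
lemma superComplete_snoc (x : Fin m → R) (z : Fin n → R) (w : R) (a : ℤ) :
    superComplete x (Fin.snoc z w : Fin (n + 1) → R) a
      = superComplete x z a - w * superComplete x z (a - 1) := by
  have hz : superComplete x z a = ∑ j ∈ range (n + 1 + 1),
      (-1 : R) ^ j * completeHom x (a - j) * elemSym z j := by
    rw [superComplete, sum_range_succ _ (n + 1), elemSym_of_lt z (by omega), mul_zero, add_zero]
  have hw : ∑ j ∈ range (n + 1 + 1), (-1 : R) ^ j * completeHom x (a - j) * (w * elemSym z (j - 1))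
      = -(w * superComplete x z (a - 1)) := by
    rw [sum_range_succ', superComplete, mul_sum, ← sum_neg_distrib]
    simp only [Nat.cast_zero, zero_sub, elemSym_of_neg z (show (-1 : ℤ) < 0 by norm_num),
      mul_zero, add_zero, Nat.cast_succ, add_sub_cancel_right, pow_succ, sub_add_eq_sub_sub]
    exact sum_congr rfl fun j _ => by rw [sub_right_comm]; ring
  rw [superComplete, sum_congr rfl fun j _ => by rw [elemSym_snoc, mul_add], sum_add_distrib,
    ← hz, hw]
  ring

/-- `H(x, z; t) = H(x, (z, w); t) / (1 - w t)`, truncated using that `h_b = 0` for `b < 0`. -/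
lemma superComplete_eq_sum_snoc (x : Fin m → R) (z : Fin n → R) (w : R) {N : ℕ} {a : ℤ}
    (ha : a ≤ N) :
    superComplete x z a
      = ∑ r ∈ range (N + 1), w ^ r * superComplete x (Fin.snoc z w : Fin (n + 1) → R) (a - r) := by
  have htel : ∀ r : ℕ, w ^ r * superComplete x (Fin.snoc z w : Fin (n + 1) → R) (a - r)
      = w ^ r * superComplete x z (a - r) - w ^ (r + 1) * superComplete x z (a - ↑(r + 1)) := by
    intro r
    rw [superComplete_snoc, Nat.cast_succ, ← sub_sub, pow_succ]
    ring
  rw [sum_congr rfl fun r _ => htel r, sum_range_sub', superComplete_of_neg x z (a := a - ↑(N + 1))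
    (by omega)]
  simp

end SuperComplete

section Determinant

variable {ι α : Type*} [Fintype ι] [DecidableEq ι]

lemma Matrix.det_updateCol_finset_sum (A : Matrix ι ι R) (j : ι) (t : Finset α) (c : α → R)
    (g : α → ι → R) :
    (A.updateCol j fun i => ∑ a ∈ t, c a * g a i).det
      = ∑ a ∈ t, c a * (A.updateCol j (g a)).det := by
  let B : ι → ι → R := A.transpose
  have hdet : ∀ v, (A.updateCol j v).det = Matrix.detRowAlternating (Function.update B j v) :=
    fun v => by rw [← Matrix.det_transpose, ← Matrix.updateRow_transpose]; rfl
  have hsum : (fun i => ∑ a ∈ t, c a * g a i) = ∑ a ∈ t, c a • g a := by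
    ext i
    simp [Finset.sum_apply]
  rw [hsum, hdet, AlternatingMap.map_update_sum]
  simp only [AlternatingMap.map_update_smul, hdet, smul_eq_mul]

lemma Matrix.det_of_sub_mul_prev_col {m : ℕ} (M : Matrix (Fin (m + 1)) (Fin (m + 1)) R) (w : R) :
    (Matrix.of fun i j => Fin.cases (M i 0) (fun j => M i j.succ - w * M i j.castSucc) j).det
      = M.det := by
  set S : Matrix (Fin (m + 1)) (Fin (m + 1)) R :=
    Matrix.of fun k j => if (k : ℕ) + 1 = j then 1 else 0
  have hS : ∀ i j, (M * S) i j = Fin.cases 0 (fun j => M i j.castSucc) j := by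
    intro i j
    cases j using Fin.cases with
    | zero => simp [S, Matrix.mul_apply]
    | succ j =>
      have hval : ∀ k : Fin (m + 1), (k : ℕ) = j ↔ k = j.castSucc := by simp [Fin.ext_iff]
      simp [S, Matrix.mul_apply, hval]
  have hU : (1 - w • S).IsUpperTriangular := by
    intro k j hjk
    have hjk : (j : ℕ) < k := hjk
    simp [S, Fin.ne_of_val_ne (show (k : ℕ) ≠ j by omega),
      show (k : ℕ) + 1 ≠ j by omega]
  have hdetU : (1 - w • S).det = 1 := by
    rw [Matrix.det_of_isUpperTriangular hU]
    exact prod_eq_one fun k _ => by simp [S]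
  rw [← mul_one M.det, ← hdetU, ← Matrix.det_mul]
  congr 1
  ext i j
  rw [Matrix.mul_sub, Matrix.mul_one, Matrix.mul_smul, Matrix.sub_apply, Matrix.smul_apply, hS]
  cases j using Fin.cases <;> simp

end Determinant

section JacobiTrudy

variable {m n L : ℕ}

noncomputable def shiftedSuperSchur (x : Fin m → R) (y : Fin n → R) (lam : Fin (L + 1) → ℕ)
    (r : ℕ) : R :=
  ((Matrix.of fun i j : Fin (L + 1) => superComplete x y ((lam i : ℤ) + (j : ℤ) - (i : ℤ)))
    |>.updateCol 0 fun i => superComplete x y ((lam i : ℤ) - (i : ℤ) - (r : ℤ))).det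

lemma shiftedSuperSchur_zero (x : Fin m → R) (y : Fin n → R) (lam : Fin (L + 1) → ℕ) :
    shiftedSuperSchur x y lam 0 = superSchur x y lam := by
  rw [shiftedSuperSchur, superSchur]
  congr 1
  convert Matrix.updateCol_eq_self _ (0 : Fin (L + 1)) using 2
  simp

lemma shiftedSuperSchur_comp_perm (x : Fin m → R) (y : Fin n → R) (τ : Perm (Fin n))
    (lam : Fin (L + 1) → ℕ) (r : ℕ) :
    shiftedSuperSchur x (y ∘ τ) lam r = shiftedSuperSchur x y lam r := by
  simp only [shiftedSuperSchur, superComplete_comp_perm]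

lemma superSchur_comp_perm (x : Fin m → R) (y : Fin n → R) (τ : Perm (Fin n))
    (lam : Fin L → ℕ) : superSchur x (y ∘ τ) lam = superSchur x y lam := by
  simp only [superSchur, superComplete_comp_perm]

lemma superSchur_eq_sum_pow_mul_shiftedSuperSchur (x : Fin m → R) (z : Fin n → R) (w : R)
    (lam : Fin (L + 1) → ℕ) (hlam : ∀ i, lam i ≤ n) :
    superSchur x z lam
      = ∑ r ∈ range (n + 1),
          w ^ r * shiftedSuperSchur x (Fin.snoc z w : Fin (n + 1) → R) lam r := by
  have hcols : (Matrix.of fun i j : Fin (L + 1) => Fin.cases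
      (superComplete x z ((lam i : ℤ) - (i : ℤ)))
      (fun j => superComplete x z ((lam i : ℤ) + (j.succ : ℤ) - (i : ℤ))
        - w * superComplete x z ((lam i : ℤ) + (j.castSucc : ℤ) - (i : ℤ))) j)
      = Matrix.updateCol (Matrix.of fun i j : Fin (L + 1) =>
          superComplete x (Fin.snoc z w : Fin (n + 1) → R) ((lam i : ℤ) + (j : ℤ) - (i : ℤ)))
        0 fun i => superComplete x z ((lam i : ℤ) - (i : ℤ)) := by
    ext i j
    cases j using Fin.cases with
    | zero => simp
    | succ j =>
      simp only [Matrix.updateCol_ne (Fin.succ_ne_zero j), Matrix.of_apply, Fin.cases_succ,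
        superComplete_snoc]
      congr 3
      simp only [Fin.val_succ, Fin.val_castSucc]
      push_cast
      ring
  rw [superSchur, ← Matrix.det_of_sub_mul_prev_col _ w]
  simp only [Matrix.of_apply, Fin.val_zero, Nat.cast_zero, add_zero]
  rw [hcols, funext fun i => superComplete_eq_sum_snoc x z w (N := n)
    (show (lam i : ℤ) - i ≤ n by have := hlam i; omega)]
  exact Matrix.det_updateCol_finset_sum _ 0 _ _ _

end JacobiTrudy

lemma sum_sign_mul_prod_pow_eq_zero {k : ℕ} (y : Fin k → R) {e : Fin k → ℕ}
    (he : ¬ Function.Injective e) :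
    ∑ τ : Perm (Fin k), ((Perm.sign τ : ℤ) : R) * ∏ j, y (τ j) ^ e j = 0 := by
  obtain ⟨i, j, hij, hne⟩ : ∃ i j, e i = e j ∧ i ≠ j := by
    simpa [Function.Injective] using he
  rw [← Matrix.det_zero_of_column_eq hne (M := Matrix.of fun a b => y a ^ e b) (by simp [hij]),
    Matrix.det_apply']
  rfl

lemma sum_sign_mul_pow_last_mul_prod_eq_zero {n : ℕ} (y : Fin (n + 1) → R) {r : ℕ} (hr : r ≠ 0)
    (hrn : r ≤ n) :
    ∑ τ : Perm (Fin (n + 1)),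
        ((Perm.sign τ : ℤ) : R) * (y (τ (Fin.last n)) ^ r * ∏ j, y (τ j) ^ (n - j)) = 0 := by
  have hprod : ∀ τ : Perm (Fin (n + 1)), y (τ (Fin.last n)) ^ r * ∏ j, y (τ j) ^ (n - j)
      = ∏ j, y (τ j) ^ (Fin.snoc (fun j : Fin n => n - j) r : Fin (n + 1) → ℕ) j := by
    intro τ
    simp [Fin.prod_univ_castSucc, mul_comm]
  simp only [hprod]
  refine sum_sign_mul_prod_pow_eq_zero y fun he =>
    (Fin.castSucc_lt_last (⟨n - r, by omega⟩ : Fin n)).ne (he ?_)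
  simp only [Fin.snoc_castSucc, Fin.snoc_last]
  omega

lemma sum_sign_mul_superSchur_castSucc_mul_prod {m n L : ℕ} (x : Fin m → R) (y : Fin (n + 1) → R)
    (lam : Fin L → ℕ) (hlam : ∀ i, lam i ≤ n) :
    ∑ τ : Perm (Fin (n + 1)), ((Perm.sign τ : ℤ) : R) *
        (superSchur x ((y ∘ τ) ∘ Fin.castSucc) lam * ∏ j, y (τ j) ^ (n - j))
      = ∑ τ : Perm (Fin (n + 1)), ((Perm.sign τ : ℤ) : R) *
        (superSchur x (y ∘ τ) lam * ∏ j, y (τ j) ^ (n - j)) := by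
  cases L with
  | zero => simp [superSchur]
  | succ L =>
    have hdecomp : ∀ τ : Perm (Fin (n + 1)), superSchur x ((y ∘ τ) ∘ Fin.castSucc) lam
        = ∑ r ∈ range (n + 1), y (τ (Fin.last n)) ^ r * shiftedSuperSchur x y lam r := by
      intro τ
      have hsnoc : (Fin.snoc ((y ∘ τ) ∘ Fin.castSucc) (y (τ (Fin.last n))) : Fin (n + 1) → R)
          = y ∘ τ := Fin.snoc_init_self (y ∘ τ)
      simp only [superSchur_eq_sum_pow_mul_shiftedSuperSchur x _ (y (τ (Fin.last n))) lam hlam,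
        hsnoc, shiftedSuperSchur_comp_perm]
    simp only [hdecomp, superSchur_comp_perm, sum_mul, mul_sum]
    rw [sum_comm, sum_eq_single_of_mem 0 (mem_range.mpr n.succ_pos), shiftedSuperSchur_zero]
    · simp
    intro r hr hr0
    calc _ = shiftedSuperSchur x y lam r * ∑ τ : Perm (Fin (n + 1)), ((Perm.sign τ : ℤ) : R) *
          (y (τ (Fin.last n)) ^ r * ∏ j, y (τ j) ^ (n - j)) := by
            rw [mul_sum]
            exact sum_congr rfl fun τ _ => by ring
      _ = 0 := by
        rw [sum_sign_mul_pow_last_mul_prod_eq_zero y hr0 (Nat.lt_succ_iff.mp (mem_range.mp hr)),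
          mul_zero]

end

theorem statement11_general {R : Type*} [CommRing R] (m n : ℕ) (x : Fin m → R)
    (y : Fin (n + 1) → R) (lam : Fin m → ℕ)
    (hlam : ∀ i, lam i ≤ n) :
    (∑ σ : Equiv.Perm (Fin m), ∑ τ : Equiv.Perm (Fin (n + 1)),
      (((Equiv.Perm.sign σ : ℤ) * (Equiv.Perm.sign τ : ℤ) : ℤ) : R) *
        (superSchur (x ∘ σ) (y ∘ τ) lam *
          (∏ i, x (σ i) ^ (m - 1 - (i : ℕ))) * ∏ j, y (τ j) ^ (n - (j : ℕ)))) =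
    (∑ σ : Equiv.Perm (Fin m), ∑ τ : Equiv.Perm (Fin (n + 1)),
      (((Equiv.Perm.sign σ : ℤ) * (Equiv.Perm.sign τ : ℤ) : ℤ) : R) *
        (superSchur (x ∘ σ) ((y ∘ τ) ∘ Fin.castSucc) lam *
          (∏ i, x (σ i) ^ (m - 1 - (i : ℕ))) * ∏ j, y (τ j) ^ (n - (j : ℕ)))) := by
  refine sum_congr rfl fun σ _ => ?_
  have hfactor : ∀ S : Perm (Fin (n + 1)) → R,
      ∑ τ : Perm (Fin (n + 1)), (((Perm.sign σ : ℤ) * (Perm.sign τ : ℤ) : ℤ) : R) *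
        (S τ * (∏ i, x (σ i) ^ (m - 1 - (i : ℕ))) * ∏ j, y (τ j) ^ (n - (j : ℕ)))
      = ((Perm.sign σ : ℤ) : R) * (∏ i, x (σ i) ^ (m - 1 - (i : ℕ))) *
        ∑ τ : Perm (Fin (n + 1)),
          ((Perm.sign τ : ℤ) : R) * (S τ * ∏ j, y (τ j) ^ (n - (j : ℕ))) := by
    intro S
    rw [mul_sum]
    exact sum_congr rfl fun τ _ => by push_cast; ring
  rw [hfactor (fun τ => superSchur (x ∘ σ) (y ∘ τ) lam),
    hfactor (fun τ => superSchur (x ∘ σ) ((y ∘ τ) ∘ Fin.castSucc) lam),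
    sum_sign_mul_superSchur_castSucc_mul_prod (x ∘ σ) y lam hlam]

/-- stability: for a partition `λ` with at most `m` parts and `λ₁ < n+1`
(here there are `n+1` `y`-variables), the alternation of
`SP_λ(x; y₁,...,y_{n+1})·x^ρ y^ρ` equals the alternation of
`SP_λ(x; y₁,...,y_n)·x^ρ y^ρ` over `S_m × S_{n+1}`. -/
theorem statement11 {R : Type*} [CommRing R] (m n : ℕ) (x : Fin m → R)
    (y : Fin (n + 1) → R) (lam : Fin m → ℕ) (hanti : Antitone lam)
    (hlam : ∀ i, lam i ≤ n) :
    (∑ σ : Equiv.Perm (Fin m), ∑ τ : Equiv.Perm (Fin (n + 1)),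
      (((Equiv.Perm.sign σ : ℤ) * (Equiv.Perm.sign τ : ℤ) : ℤ) : R) *
        (superSchur (x ∘ σ) (y ∘ τ) lam *
          (∏ i, x (σ i) ^ (m - 1 - (i : ℕ))) * ∏ j, y (τ j) ^ (n - (j : ℕ)))) =
    (∑ σ : Equiv.Perm (Fin m), ∑ τ : Equiv.Perm (Fin (n + 1)),
      (((Equiv.Perm.sign σ : ℤ) * (Equiv.Perm.sign τ : ℤ) : ℤ) : R) *
        (superSchur (x ∘ σ) ((y ∘ τ) ∘ Fin.castSucc) lam *
          (∏ i, x (σ i) ^ (m - 1 - (i : ℕ))) * ∏ j, y (τ j) ^ (n - (j : ℕ)))) :=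
  statement11_general m n x y lam hlam
end
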